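/- Let d, t ≥ 1, let W₀ ∈ ℝ^{d×d} be symmetric positive definite, let X ∈ ℝ^{t×d}, θ* ∈ ℝ^d, η ∈ ℝ^t, set W = W₀ + XᵀX, Y = Xθ* + η, and θ̂ = W⁻¹XᵀY. Then √((θ̂ − θ*)ᵀ W (θ̂ − θ*)) ≥ √((Xᵀη)ᵀ W⁻¹ (Xᵀη)) − (λmax(W₀)/√(λmin(W₀)))·‖θ*‖₂, where λmax(W₀) and λmin(W₀) are the largest and smallest eigenvalues of W₀. In particular this uses the bound (W₀θ*)ᵀW⁻¹(W₀θ*) ≤ (λmax(W₀)²/λmin(W₀))·‖θ*‖₂². -/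

import Mathlib

/-!
Since `W θ* = W₀ θ* + XᵀX θ*`, the error is `θ̂ − θ* = W⁻¹ (Xᵀη − W₀θ*)`, so its `W`-norm is the
`W⁻¹`-norm of `Xᵀη − W₀θ*`, and the reverse triangle inequality for `‖·‖_{W⁻¹}` leaves the bound
`‖W₀θ*‖_{W⁻¹} ≤ (λmax/√λmin)‖θ*‖₂`. As `W₀ ≤ W` in the Loewner order,
`‖W₀θ*‖²_{W⁻¹} ≤ ‖W₀θ*‖²_{W₀⁻¹} = θ*ᵀW₀θ*`, and every eigenvalue of `W₀` is at most `λmax²/λmin`.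
-/

open Matrix
open scoped MatrixOrder

theorem Real.le_iSup_sq_div_iInf {ι : Type*} [Finite ι] {f : ι → ℝ} (hf : ∀ i, 0 < f i)
    (i : ι) : f i ≤ (⨆ j, f j) ^ 2 / ⨅ j, f j := by
  have : Nonempty ι := ⟨i⟩
  obtain ⟨j, hj⟩ := exists_eq_ciInf_of_finite (f := f)
  have hmin_pos : 0 < ⨅ j, f j := hj ▸ hf j
  have hmin_le : ⨅ j, f j ≤ f i := ciInf_le (Set.finite_range f).bddBelow i
  have hle_max : f i ≤ ⨆ j, f j := le_ciSup (Set.finite_range f).bddAbove i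
  rw [le_div_iff₀ hmin_pos, sq]
  exact mul_le_mul hle_max (hmin_le.trans hle_max) hmin_pos.le ((hf i).le.trans hle_max)

namespace Matrix

variable {m n R : Type*} [Fintype m] [Fintype n]

theorem PosSemidef.sqrt_dotProduct_mulVec_sub_le {M : Matrix n n ℝ} (hM : M.PosSemidef)
    (a b : n → ℝ) :
    √(a ⬝ᵥ M *ᵥ a) - √(b ⬝ᵥ M *ᵥ b) ≤ √((a - b) ⬝ᵥ M *ᵥ (a - b)) := by
  let normed := M.toSeminormedAddCommGroup hM
  have hnorm (v : n → ℝ) : @norm _ normed.toNorm v = √(v ⬝ᵥ M *ᵥ v) := by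
    let _ := M.toInnerProductSpace hM
    rw [norm_eq_sqrt_re_inner (𝕜 := ℝ), dotProduct_comm]
    rfl
  simpa only [hnorm] using @norm_sub_norm_le _ normed a b

variable [DecidableEq n]

theorem inv_mulVec_dotProduct_mulVec_inv_mulVec [CommRing R] {W : Matrix n n R}
    (hW : IsUnit W.det) (z : n → R) : (W⁻¹ *ᵥ z) ⬝ᵥ W *ᵥ (W⁻¹ *ᵥ z) = z ⬝ᵥ W⁻¹ *ᵥ z := by
  rw [mulVec_mulVec, mul_nonsing_inv W hW, one_mulVec, dotProduct_comm]

theorem inv_mulVec_transpose_mulVec_sub [CommRing R] (W₀ : Matrix n n R) (X : Matrix m n R)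
    (hW : IsUnit (W₀ + Xᵀ * X).det) (θ : n → R) (η : m → R) :
    (W₀ + Xᵀ * X)⁻¹ *ᵥ (Xᵀ *ᵥ (X *ᵥ θ + η)) - θ
      = (W₀ + Xᵀ * X)⁻¹ *ᵥ (Xᵀ *ᵥ η - W₀ *ᵥ θ) := by
  calc _ = (W₀ + Xᵀ * X)⁻¹ *ᵥ (Xᵀ *ᵥ (X *ᵥ θ + η))
        - (W₀ + Xᵀ * X)⁻¹ *ᵥ ((W₀ + Xᵀ * X) *ᵥ θ) := by
        rw [mulVec_mulVec θ, nonsing_inv_mul _ hW, one_mulVec]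
    _ = _ := by
        rw [← mulVec_sub, add_mulVec, mulVec_add, mulVec_mulVec]
        abel_nf

/-- With `u = W⁻¹W₀θ` this is `0 ≤ (u - θ)ᵀW₀(u - θ)` combined with `uᵀW₀u ≤ uᵀWu`. -/
theorem PosSemidef.mulVec_dotProduct_inv_mulVec_le {W₀ W : Matrix n n ℝ} (hW₀ : W₀.PosSemidef)
    (hW : IsUnit W.det) (hle : W₀ ≤ W) (θ : n → ℝ) :
    (W₀ *ᵥ θ) ⬝ᵥ W⁻¹ *ᵥ (W₀ *ᵥ θ) ≤ θ ⬝ᵥ W₀ *ᵥ θ := by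
  set u := W⁻¹ *ᵥ (W₀ *ᵥ θ)
  have hWu : W *ᵥ u = W₀ *ᵥ θ := by rw [mulVec_mulVec, mul_nonsing_inv W hW, one_mulVec]
  have hsymm : θ ⬝ᵥ W₀ *ᵥ u = u ⬝ᵥ W₀ *ᵥ θ := by
    rw [dotProduct_mulVec, ← mulVec_transpose, ← conjTranspose_eq_transpose_of_trivial,
      hW₀.isHermitian.eq, dotProduct_comm]
  have hgap := (le_iff.mp hle).dotProduct_mulVec_nonneg u
  have hdev := hW₀.dotProduct_mulVec_nonneg (u - θ)
  simp only [star_trivial, sub_mulVec, mulVec_sub, dotProduct_sub, sub_dotProduct,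
    hWu, hsymm] at hgap hdev
  rw [dotProduct_comm]
  linarith

theorem IsHermitian.dotProduct_mulVec_le_of_eigenvalues_le {A : Matrix n n ℝ}
    (hA : A.IsHermitian) {c : ℝ} (hc : ∀ i, hA.eigenvalues i ≤ c) (x : n → ℝ) :
    x ⬝ᵥ A *ᵥ x ≤ c * (x ⬝ᵥ x) := by
  have hle : A ≤ algebraMap ℝ (Matrix n n ℝ) c := by
    refine le_algebraMap_of_spectrum_le ?_ hA
    rw [hA.spectrum_real_eq_range_eigenvalues]
    rintro _ ⟨i, rfl⟩
    exact hc i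
  have := (le_iff.mp hle).dotProduct_mulVec_nonneg x
  rw [Algebra.algebraMap_eq_smul_one, star_trivial, sub_mulVec, dotProduct_sub, smul_mulVec,
    one_mulVec, dotProduct_smul, smul_eq_mul] at this
  exact sub_nonneg.mp this

end Matrix

theorem stmt_6_general {d t : ℕ}
    (W0 : Matrix (Fin d) (Fin d) ℝ) (hW0 : W0.PosDef)
    (X : Matrix (Fin t) (Fin d) ℝ) (θstar : Fin d → ℝ) (η : Fin t → ℝ)
    (Y : Fin t → ℝ) (hY : Y = X *ᵥ θstar + η)
    (W : Matrix (Fin d) (Fin d) ℝ) (hW : W = W0 + Xᵀ * X)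
    (θhat : Fin d → ℝ) (hθhat : θhat = W⁻¹ *ᵥ (Xᵀ *ᵥ Y)) :
    Real.sqrt ((Xᵀ *ᵥ η) ⬝ᵥ (W⁻¹ *ᵥ (Xᵀ *ᵥ η)))
      - (⨆ i, hW0.1.eigenvalues i) / Real.sqrt (⨅ i, hW0.1.eigenvalues i)
        * Real.sqrt (θstar ⬝ᵥ θstar)
      ≤ Real.sqrt ((θhat - θstar) ⬝ᵥ (W *ᵥ (θhat - θstar))) := by
  have hXX : (Xᵀ * X).PosSemidef := by simpa using posSemidef_conjTranspose_mul_self X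
  have hW0W : W0 ≤ W := hW ▸ le_add_of_nonneg_right (nonneg_iff_posSemidef.mpr hXX)
  have hWpd : W.PosDef := hW ▸ hW0.add_posSemidef hXX
  have hWdet : IsUnit W.det := (isUnit_iff_isUnit_det W).mp hWpd.isUnit
  have herr : θhat - θstar = W⁻¹ *ᵥ (Xᵀ *ᵥ η - W0 *ᵥ θstar) := by
    subst hY hW hθhat
    exact inv_mulVec_transpose_mulVec_sub W0 X hWdet θstar η
  rw [herr, inv_mulVec_dotProduct_mulVec_inv_mulVec hWdet]
  refine le_trans ?_ (hWpd.inv.posSemidef.sqrt_dotProduct_mulVec_sub_le _ _)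
  gcongr
  have hmax : 0 ≤ ⨆ i, hW0.1.eigenvalues i := Real.iSup_nonneg fun i ↦ (hW0.eigenvalues_pos i).le
  have hmin : 0 ≤ ⨅ i, hW0.1.eigenvalues i := Real.iInf_nonneg fun i ↦ (hW0.eigenvalues_pos i).le
  calc √((W0 *ᵥ θstar) ⬝ᵥ W⁻¹ *ᵥ (W0 *ᵥ θstar))
      ≤ √(θstar ⬝ᵥ W0 *ᵥ θstar) :=
        Real.sqrt_le_sqrt (hW0.posSemidef.mulVec_dotProduct_inv_mulVec_le hWdet hW0W θstar)
    _ ≤ √((⨆ i, hW0.1.eigenvalues i) ^ 2 / (⨅ i, hW0.1.eigenvalues i) * (θstar ⬝ᵥ θstar)) :=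
        Real.sqrt_le_sqrt (hW0.1.dotProduct_mulVec_le_of_eigenvalues_le
          (Real.le_iSup_sq_div_iInf hW0.eigenvalues_pos) θstar)
    _ = _ := by
        rw [Real.sqrt_mul' _ (by simpa using dotProduct_star_self_nonneg θstar),
          Real.sqrt_div' _ hmin, Real.sqrt_sq hmax]

/-- For the linear model `Y = Xθ* + η` with `θ̂ = W⁻¹XᵀY`,
`W = W₀ + XᵀX`, one has
`√((θ̂−θ*)ᵀW(θ̂−θ*)) ≥ √((Xᵀη)ᵀW⁻¹(Xᵀη)) − (λmax(W₀)/√(λmin(W₀)))·‖θ*‖₂`. -/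
theorem stmt_6 {d t : ℕ} (hd : 1 ≤ d) (ht : 1 ≤ t)
    (W0 : Matrix (Fin d) (Fin d) ℝ) (hW0 : W0.PosDef)
    (X : Matrix (Fin t) (Fin d) ℝ) (θstar : Fin d → ℝ) (η : Fin t → ℝ)
    (Y : Fin t → ℝ) (hY : Y = X *ᵥ θstar + η)
    (W : Matrix (Fin d) (Fin d) ℝ) (hW : W = W0 + Xᵀ * X)
    (θhat : Fin d → ℝ) (hθhat : θhat = W⁻¹ *ᵥ (Xᵀ *ᵥ Y)) :
    Real.sqrt ((Xᵀ *ᵥ η) ⬝ᵥ (W⁻¹ *ᵥ (Xᵀ *ᵥ η)))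
      - (⨆ i, hW0.1.eigenvalues i) / Real.sqrt (⨅ i, hW0.1.eigenvalues i)
        * Real.sqrt (θstar ⬝ᵥ θstar)
      ≤ Real.sqrt ((θhat - θstar) ⬝ᵥ (W *ᵥ (θhat - θstar))) :=
  stmt_6_general W0 hW0 X θstar η Y hY W hW θhat hθhat
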